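/- arXiv:1703.03938 — 4 statements merged into one kernel-verified Lean document; each statement's English description precedes it below -/
import Mathlib

section
/- Let D = ℝ⁺ × ℝ⁺, let β₁, β₂ > 0, and let Φ : D → ℝ⁺ be a function satisfying Φ(β₁·x + β₂·y) = β₁·Φ(x) + β₂·Φ(y) for all x, y ∈ D (with scalar multiplication and addition taken componentwise), and suppose Φ(x) → 0 as x → (0,0). Then Φ is additive: Φ(x + y) = Φ(x) + Φ(y) for all x, y ∈ D. -/
/-!
Expanding `Φ (w + (β₁ * β₂) • δ)` in two ways and letting `δ → 0` shows that
`g w := β₁ • Φ (β₁⁻¹ • w)` equals `β₂ • Φ (β₂⁻¹ • w)`, so `Φ (x + y) = g x + g y`: a Pexider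
equation on the cone. Its defect `g (x + y) - g x - g y` is constant, and vanishes by letting
`x = y → 0`; hence `g` is additive, `Φ = g` by splitting `x` into halves, and `Φ` is additive.
-/

open Filter Topology

namespace ConvexCone

variable {E F : Type*} [AddCommGroup E] [Module ℝ E] [TopologicalSpace E] [ContinuousConstSMul ℝ E]
  [AddCommGroup F] [TopologicalSpace F] [IsTopologicalAddGroup F] [T2Space F]
  (C : ConvexCone ℝ E)

lemma tendsto_smul_nhdsWithin_zero {c : ℝ} (hc : 0 < c) :
    Tendsto (c • ·) (𝓝[C] (0 : E)) (𝓝[C] 0) :=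
  tendsto_nhdsWithin_of_tendsto_nhds_of_eventually_within _
    ((continuous_const_smul c).tendsto' 0 0 (smul_zero c) |>.mono_left nhdsWithin_le_nhds)
    (eventually_nhdsWithin_of_forall fun _ hx ↦ C.smul_mem hc hx)

lemma map_add_of_pexider [(𝓝[C] (0 : E)).NeBot]
    {f g : E → F} (hfg : ∀ x ∈ C, ∀ y ∈ C, f (x + y) = g x + g y)
    (hg : Tendsto g (𝓝[C] 0) (𝓝 0)) {x y : E} (hx : x ∈ C) (hy : y ∈ C) :
    g (x + y) = g x + g y := by
  set defect : E → E → F := fun x y ↦ g (x + y) - g x - g y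
  have shift : ∀ u ∈ C, ∀ v ∈ C, ∀ w ∈ C, defect u v = defect v w := by
    intro u hu v hv w hw
    have h := hfg u hu (v + w) (C.add_mem hv hw)
    rw [← add_assoc, hfg (u + v) (C.add_mem hu hv) w hw] at h
    calc defect u v = (g (u + v) + g w) - g u - g v - g w := by simp only [defect]; abel
      _ = defect v w := by rw [h]; simp only [defect]; abel
  have const : ∀ z ∈ C, defect z z = defect x y := fun z hz ↦
    ((shift x hx y hy z hz).trans (shift y hy z hz z hz)).symm
  have defect_diag : Tendsto (fun z ↦ defect z z) (𝓝[C] 0) (𝓝 0) := by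
    have h2 : Tendsto (fun z ↦ g ((2 : ℝ) • z)) (𝓝[C] 0) (𝓝 0) :=
      hg.comp (C.tendsto_smul_nhdsWithin_zero two_pos)
    simpa [defect, two_smul] using (h2.sub hg).sub hg
  have hev : (fun z ↦ defect z z) =ᶠ[𝓝[C] 0] fun _ ↦ defect x y :=
    eventually_nhdsWithin_of_forall const
  have : defect x y = 0 := tendsto_nhds_unique (tendsto_const_nhds.congr' hev.symm) defect_diag
  simpa [defect, sub_sub, sub_eq_zero] using this

lemma eqOn_of_pexider [(𝓝[C] (0 : E)).NeBot]
    {f g : E → F} (hfg : ∀ x ∈ C, ∀ y ∈ C, f (x + y) = g x + g y)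
    (hg : Tendsto g (𝓝[C] 0) (𝓝 0)) : Set.EqOn f g C := by
  intro z hz
  have hz' : (2 : ℝ)⁻¹ • z ∈ C := C.smul_mem (by norm_num) hz
  have halves : (2 : ℝ)⁻¹ • z + (2 : ℝ)⁻¹ • z = z := by rw [← add_smul]; norm_num
  rw [← halves, hfg _ hz' _ hz', C.map_add_of_pexider hfg hg hz' hz']

section Rescaling

variable [Module ℝ F] [ContinuousConstSMul ℝ F] {Φ : E → F} {β₁ β₂ : ℝ}

lemma smul_map_inv_smul_eq (hβ₁ : 0 < β₁) (hβ₂ : 0 < β₂) [(𝓝[C] (0 : E)).NeBot]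
    (heq : ∀ x ∈ C, ∀ y ∈ C, Φ (β₁ • x + β₂ • y) = β₁ • Φ x + β₂ • Φ y)
    (hΦ : Tendsto Φ (𝓝[C] 0) (𝓝 0)) {w : E} (hw : w ∈ C) :
    β₁ • Φ (β₁⁻¹ • w) = β₂ • Φ (β₂⁻¹ • w) := by
  have hw₁ : β₁⁻¹ • w ∈ C := C.smul_mem (inv_pos.2 hβ₁) hw
  have hw₂ : β₂⁻¹ • w ∈ C := C.smul_mem (inv_pos.2 hβ₂) hw
  have two_ways : ∀ δ ∈ C, β₁ • Φ (β₁⁻¹ • w) + β₂ • Φ (β₁ • δ) =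
      β₂ • Φ (β₂⁻¹ • w) + β₁ • Φ (β₂ • δ) := by
    intro δ hδ
    have split : β₁ • β₁⁻¹ • w + β₂ • β₁ • δ = β₂ • β₂⁻¹ • w + β₁ • β₂ • δ := by
      rw [smul_inv_smul₀ hβ₁.ne', smul_inv_smul₀ hβ₂.ne', smul_comm β₂ β₁, add_comm]
    rw [← heq _ hw₁ _ (C.smul_mem hβ₁ hδ), split, add_comm,
      heq _ (C.smul_mem hβ₂ hδ) _ hw₂, add_comm]
  have lim : ∀ {a b : ℝ}, 0 < b → ∀ c : F,
      Tendsto (fun δ ↦ c + a • Φ (b • δ)) (𝓝[C] 0) (𝓝 c) := fun {a _} hb c ↦ by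
    simpa using ((hΦ.comp (C.tendsto_smul_nhdsWithin_zero hb)).const_smul a).const_add c
  exact tendsto_nhds_unique ((lim hβ₁ _).congr' (eventually_nhdsWithin_of_forall two_ways))
    (lim hβ₂ _)

lemma map_add_eq_smul_map_inv_smul_add (hβ₁ : 0 < β₁) (hβ₂ : 0 < β₂) [(𝓝[C] (0 : E)).NeBot]
    (heq : ∀ x ∈ C, ∀ y ∈ C, Φ (β₁ • x + β₂ • y) = β₁ • Φ x + β₂ • Φ y)
    (hΦ : Tendsto Φ (𝓝[C] 0) (𝓝 0)) {x y : E} (hx : x ∈ C) (hy : y ∈ C) :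
    Φ (x + y) = β₁ • Φ (β₁⁻¹ • x) + β₁ • Φ (β₁⁻¹ • y) := by
  conv_lhs => rw [← smul_inv_smul₀ hβ₁.ne' x, ← smul_inv_smul₀ hβ₂.ne' y]
  rw [heq _ (C.smul_mem (inv_pos.2 hβ₁) hx) _ (C.smul_mem (inv_pos.2 hβ₂) hy),
    C.smul_map_inv_smul_eq hβ₁ hβ₂ heq hΦ hy]

lemma map_add_of_map_smul_add_smul (hβ₁ : 0 < β₁) (hβ₂ : 0 < β₂) [(𝓝[C] (0 : E)).NeBot]
    (heq : ∀ x ∈ C, ∀ y ∈ C, Φ (β₁ • x + β₂ • y) = β₁ • Φ x + β₂ • Φ y)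
    (hΦ : Tendsto Φ (𝓝[C] 0) (𝓝 0)) {x y : E} (hx : x ∈ C) (hy : y ∈ C) :
    Φ (x + y) = Φ x + Φ y := by
  have hg : Tendsto (fun z ↦ β₁ • Φ (β₁⁻¹ • z)) (𝓝[C] 0) (𝓝 0) := by
    simpa using (hΦ.comp (C.tendsto_smul_nhdsWithin_zero (inv_pos.2 hβ₁))).const_smul β₁
  have hΦg := C.eqOn_of_pexider
    (fun _ hx _ hy ↦ C.map_add_eq_smul_map_inv_smul_add hβ₁ hβ₂ heq hΦ hx hy) hg
  rw [C.map_add_eq_smul_map_inv_smul_add hβ₁ hβ₂ heq hΦ hx hy, hΦg hx, hΦg hy]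

end Rescaling

end ConvexCone

def posQuadrant : ConvexCone ℝ (ℝ × ℝ) where
  carrier := Set.Ioi (0 : ℝ) ×ˢ Set.Ioi (0 : ℝ)
  smul_mem' _ hc _ hx := ⟨mul_pos hc hx.1, mul_pos hc hx.2⟩
  add_mem' x hx y hy :=
    show 0 < x.1 + y.1 ∧ 0 < x.2 + y.2 from ⟨add_pos hx.1 hy.1, add_pos hx.2 hy.2⟩

instance posQuadrant.nhdsWithin_zero_neBot : (𝓝[posQuadrant] (0 : ℝ × ℝ)).NeBot := by
  change (𝓝[Set.Ioi 0 ×ˢ Set.Ioi 0] ((0 : ℝ), (0 : ℝ))).NeBot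
  rw [nhdsWithin_prod_eq]
  infer_instance

theorem stmt_4_general (Φ : ℝ × ℝ → ℝ) (β₁ β₂ : ℝ) (hβ₁ : 0 < β₁) (hβ₂ : 0 < β₂)
    (heq : ∀ p q : ℝ × ℝ, p ∈ Set.Ioi (0:ℝ) ×ˢ Set.Ioi (0:ℝ) →
      q ∈ Set.Ioi (0:ℝ) ×ˢ Set.Ioi (0:ℝ) →
      Φ (β₁ • p + β₂ • q) = β₁ * Φ p + β₂ * Φ q)
    (hlim : Filter.Tendsto Φ
      (nhdsWithin (0, 0) (Set.Ioi (0:ℝ) ×ˢ Set.Ioi (0:ℝ))) (nhds 0)) :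
    ∀ p q : ℝ × ℝ, p ∈ Set.Ioi (0:ℝ) ×ˢ Set.Ioi (0:ℝ) →
      q ∈ Set.Ioi (0:ℝ) ×ˢ Set.Ioi (0:ℝ) → Φ (p + q) = Φ p + Φ q :=
  fun _ _ hp hq ↦ posQuadrant.map_add_of_map_smul_add_smul hβ₁ hβ₂
    (fun p hp q hq ↦ heq p q hp hq) hlim hp hq

theorem stmt_4 (Φ : ℝ × ℝ → ℝ) (β₁ β₂ : ℝ) (hβ₁ : 0 < β₁) (hβ₂ : 0 < β₂)
    (hpos : ∀ p : ℝ × ℝ, p ∈ Set.Ioi (0:ℝ) ×ˢ Set.Ioi (0:ℝ) → 0 < Φ p)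
    (heq : ∀ p q : ℝ × ℝ, p ∈ Set.Ioi (0:ℝ) ×ˢ Set.Ioi (0:ℝ) →
      q ∈ Set.Ioi (0:ℝ) ×ˢ Set.Ioi (0:ℝ) →
      Φ (β₁ • p + β₂ • q) = β₁ * Φ p + β₂ * Φ q)
    (hlim : Filter.Tendsto Φ
      (nhdsWithin (0, 0) (Set.Ioi (0:ℝ) ×ˢ Set.Ioi (0:ℝ))) (nhds 0)) :
    ∀ p q : ℝ × ℝ, p ∈ Set.Ioi (0:ℝ) ×ˢ Set.Ioi (0:ℝ) →
      q ∈ Set.Ioi (0:ℝ) ×ˢ Set.Ioi (0:ℝ) → Φ (p + q) = Φ p + Φ q :=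
  stmt_4_general Φ β₁ β₂ hβ₁ hβ₂ heq hlim
end

section
/- Let φ : ℝ⁺ → ℝ⁺ be a continuous bijection, let α₁, α₂ > 0, and let a, b ≥ 0 with a + b ≠ 0 satisfy α₁·φ(x) + α₂·φ(y) = φ(a·x + b·y) for all x, y > 0. Then φ is strictly increasing (it cannot be strictly decreasing). -/
/-!
A continuous injection of `(0, ∞)` is strictly monotone or strictly antitone. The equation gives
`φ z = α₁ φ x + α₂ φ y > α₂ φ 1` for every large `z` (write `z = a x + b` with `x > 0` when
`a > 0`, and argue symmetrically when `a = 0 < b`), so `φ` stays above a positive constant `m` on a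
ray. A strictly decreasing surjection onto `(0, ∞)` cannot do that: past the point where it takes
the value `m`, it is smaller than `m`.
-/

open Set Function

theorem ContinuousOn.strictMonoOn_or_strictAntiOn_of_injOn {α δ : Type*}
    [ConditionallyCompleteLinearOrder α] [DenselyOrdered α] [TopologicalSpace α] [OrderTopology α]
    [LinearOrder δ] [TopologicalSpace δ] [OrderClosedTopology δ]
    {s : Set α} [OrdConnected s] {f : α → δ} (hf_c : ContinuousOn f s) (hf_i : InjOn f s) :
    StrictMonoOn f s ∨ StrictAntiOn f s := by
  rcases s.eq_empty_or_nonempty with rfl | ⟨x, hx⟩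
  · exact Or.inl fun _ h => h.elim
  have : Inhabited s := ⟨⟨x, hx⟩⟩
  exact (Continuous.strictMono_of_inj hf_c.domRestrict hf_i.injective).imp
    strictMono_domRestrict.mp strictAntiOn_iff_strictAnti.mpr

theorem mul_apply_one_lt_of_add_eq_apply_affine {φ : ℝ → ℝ} {α₁ α₂ a b z : ℝ}
    (hα₁ : 0 < α₁) (ha : 0 < a) (hpos : ∀ x, 0 < x → 0 < φ x)
    (heq : ∀ x y, 0 < x → 0 < y → α₁ * φ x + α₂ * φ y = φ (a * x + b * y)) (hz : b < z) :
    α₂ * φ 1 < φ z := by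
  have hx : 0 < (z - b) / a := div_pos (sub_pos.mpr hz) ha
  have hz_eq : a * ((z - b) / a) + b * 1 = z := by field_simp; ring
  have h := heq _ 1 hx one_pos
  rw [hz_eq] at h
  nlinarith [mul_pos hα₁ (hpos _ hx)]

theorem not_strictAntiOn_Ioi_of_surjOn {φ : ℝ → ℝ} (hsurj : SurjOn φ (Ioi 0) (Ioi 0))
    {m t : ℝ} (hm : 0 < m) (hlt : ∀ z, t < z → m < φ z) : ¬ StrictAntiOn φ (Ioi 0) := by
  intro hanti
  obtain ⟨z₀, hz₀, hφz₀⟩ := hsurj (mem_Ioi.mpr hm)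
  have hz₀_lt : z₀ < max z₀ t + 1 := by linarith [le_max_left z₀ t]
  have hdecr := hanti hz₀ (mem_Ioi.mpr (lt_trans hz₀ hz₀_lt)) hz₀_lt
  have habove := hlt (max z₀ t + 1) (by linarith [le_max_right z₀ t])
  linarith

theorem stmt_6 (φ : ℝ → ℝ) (α₁ α₂ a b : ℝ)
    (hα₁ : 0 < α₁) (hα₂ : 0 < α₂) (ha : 0 ≤ a) (hb : 0 ≤ b) (hab : a + b ≠ 0)
    (hbij : Set.BijOn φ (Set.Ioi (0:ℝ)) (Set.Ioi (0:ℝ)))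
    (hcont : ContinuousOn φ (Set.Ioi (0:ℝ)))
    (heq : ∀ x y : ℝ, 0 < x → 0 < y →
      α₁ * φ x + α₂ * φ y = φ (a * x + b * y)) :
    StrictMonoOn φ (Set.Ioi (0:ℝ)) := by
  have hpos : ∀ x, 0 < x → 0 < φ x := fun _ hx => hbij.mapsTo hx
  refine (hcont.strictMonoOn_or_strictAntiOn_of_injOn hbij.injOn).resolve_right ?_
  rcases ha.lt_or_eq with ha | rfl
  · exact not_strictAntiOn_Ioi_of_surjOn hbij.surjOn (mul_pos hα₂ (hpos 1 one_pos))
      fun _ hz => mul_apply_one_lt_of_add_eq_apply_affine hα₁ ha hpos heq hz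
  · have hb : 0 < b := hb.lt_of_ne (by simpa using hab.symm)
    have heq_swap : ∀ x y, 0 < x → 0 < y → α₂ * φ x + α₁ * φ y = φ (b * x + 0 * y) := by
      intro x y hx hy
      rw [add_comm, heq y x hy hx]
      ring_nf
    exact not_strictAntiOn_Ioi_of_surjOn hbij.surjOn (mul_pos hα₁ (hpos 1 one_pos))
      fun _ hz => mul_apply_one_lt_of_add_eq_apply_affine hα₂ hb hpos heq_swap hz
end

section
/- Let φ : ℝ⁺ → ℝ⁺ be a strictly increasing continuous bijection, α₁, α₂ > 0, and a, b ≥ 0 with a + b ≠ 0, such that α₁·φ(x) + α₂·φ(y) = φ(a·x + b·y) for all x, y > 0. Then a > 0, b > 0, φ satisfies α₁·φ(x) = φ(a·x) and α₂·φ(y) = φ(b·y) for all x, y > 0, and φ(x + y) = φ(x) + φ(y) for all x, y > 0. -/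
/-!
Letting `y → 0⁺` in `α₁ φ(x) + α₂ φ(y) = φ(a x + b y)` kills `α₂ φ(y)` (a strictly increasing
bijection of `(0, ∞)` tends to `0` at `0⁺`), so continuity at `a x` gives `α₁ φ(x) = φ(a x)`;
symmetrically `α₂ φ(y) = φ(b y)`. Feeding `x / a` and `y / b` back into the equation then
gives additivity.
-/

open Set Filter Topology

theorem StrictMonoOn.tendsto_nhdsGT_zero_of_surjOn {φ : ℝ → ℝ}
    (hmaps : MapsTo φ (Ioi 0) (Ioi 0)) (hsurj : SurjOn φ (Ioi 0) (Ioi 0))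
    (hmono : StrictMonoOn φ (Ioi 0)) : Tendsto φ (𝓝[>] 0) (𝓝 0) := by
  refine tendsto_order.2 ⟨fun c hc => ?_, fun c hc => ?_⟩
  · exact eventually_nhdsWithin_of_forall fun y hy => hc.trans (hmaps hy)
  · obtain ⟨y₀, hy₀, rfl⟩ := hsurj hc
    filter_upwards [Ioo_mem_nhdsGT hy₀] with y hy
    exact hmono hy.1 hy₀ hy.2

namespace FunEq

variable {φ : ℝ → ℝ} {α₁ α₂ a b : ℝ}

theorem swap (heq : ∀ x y : ℝ, 0 < x → 0 < y → α₁ * φ x + α₂ * φ y = φ (a * x + b * y)) :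
    ∀ y x : ℝ, 0 < y → 0 < x → α₂ * φ y + α₁ * φ x = φ (b * y + a * x) := by
  intro y x hy hx
  rw [add_comm, heq x y hx hy, add_comm]

/-- If `a = 0` the right-hand side does not see `x`, which injectivity forbids. -/
theorem coeff_ne_zero (hα₁ : α₁ ≠ 0) (hinj : InjOn φ (Ioi 0))
    (heq : ∀ x y : ℝ, 0 < x → 0 < y → α₁ * φ x + α₂ * φ y = φ (a * x + b * y)) : a ≠ 0 := by
  rintro rfl
  have h₁ := heq 1 1 one_pos one_pos
  have h₂ := heq 2 1 two_pos one_pos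
  simp only [zero_mul, zero_add] at h₁ h₂
  have hφ : φ 1 = φ 2 := mul_left_cancel₀ hα₁ (by linarith)
  have := hinj (mem_Ioi.2 one_pos) (mem_Ioi.2 two_pos) hφ
  norm_num at this

theorem mul_apply_eq_apply_mul (hcont : ContinuousOn φ (Ioi 0)) (hφ₀ : Tendsto φ (𝓝[>] 0) (𝓝 0)) (ha : 0 < a)
    (heq : ∀ x y : ℝ, 0 < x → 0 < y → α₁ * φ x + α₂ * φ y = φ (a * x + b * y)) :
    ∀ x : ℝ, 0 < x → α₁ * φ x = φ (a * x) := by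
  intro x hx
  have hcontAt : ContinuousAt φ (a * x) := hcont.continuousAt (Ioi_mem_nhds (mul_pos ha hx))
  have hlin : Tendsto (fun y => a * x + b * y) (𝓝[>] 0) (𝓝 (a * x)) := by
    have hc : Continuous fun y => a * x + b * y := by fun_prop
    exact (hc.tendsto' 0 _ (by simp)).mono_left nhdsWithin_le_nhds
  have hlhs : Tendsto (fun y => α₁ * φ x + α₂ * φ y) (𝓝[>] 0) (𝓝 (α₁ * φ x + α₂ * 0)) :=
    (hφ₀.const_mul α₂).const_add _
  have hrhs : Tendsto (fun y => φ (a * x + b * y)) (𝓝[>] 0) (𝓝 (φ (a * x))) :=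
    hcontAt.tendsto.comp hlin
  have hfun : (fun y => α₁ * φ x + α₂ * φ y) =ᶠ[𝓝[>] 0] fun y => φ (a * x + b * y) :=
    eventually_nhdsWithin_of_forall fun y hy => heq x y hx hy
  simpa using tendsto_nhds_unique (hlhs.congr' hfun) hrhs

end FunEq

theorem stmt_7_general (φ : ℝ → ℝ) (α₁ α₂ a b : ℝ)
    (hα₁ : 0 < α₁) (hα₂ : 0 < α₂) (ha : 0 ≤ a) (hb : 0 ≤ b)
    (hbij : Set.BijOn φ (Set.Ioi (0:ℝ)) (Set.Ioi (0:ℝ)))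
    (hcont : ContinuousOn φ (Set.Ioi (0:ℝ)))
    (hmono : StrictMonoOn φ (Set.Ioi (0:ℝ)))
    (heq : ∀ x y : ℝ, 0 < x → 0 < y →
      α₁ * φ x + α₂ * φ y = φ (a * x + b * y)) :
    0 < a ∧ 0 < b ∧
    (∀ x : ℝ, 0 < x → α₁ * φ x = φ (a * x)) ∧
    (∀ y : ℝ, 0 < y → α₂ * φ y = φ (b * y)) ∧
    (∀ x y : ℝ, 0 < x → 0 < y → φ (x + y) = φ x + φ y) := by
  have hapos : 0 < a := ha.lt_of_ne' (FunEq.coeff_ne_zero hα₁.ne' hmono.injOn heq)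
  have hbpos : 0 < b := hb.lt_of_ne' (FunEq.coeff_ne_zero hα₂.ne' hmono.injOn (FunEq.swap heq))
  have hφ₀ := hmono.tendsto_nhdsGT_zero_of_surjOn hbij.mapsTo hbij.surjOn
  have hscale₁ := FunEq.mul_apply_eq_apply_mul hcont hφ₀ hapos heq
  have hscale₂ := FunEq.mul_apply_eq_apply_mul hcont hφ₀ hbpos (FunEq.swap heq)
  refine ⟨hapos, hbpos, hscale₁, hscale₂, fun x y hx hy => ?_⟩
  have h := heq (x / a) (y / b) (div_pos hx hapos) (div_pos hy hbpos)
  rwa [hscale₁ _ (div_pos hx hapos), hscale₂ _ (div_pos hy hbpos),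
    mul_div_cancel₀ _ hapos.ne', mul_div_cancel₀ _ hbpos.ne', eq_comm] at h

theorem stmt_7 (φ : ℝ → ℝ) (α₁ α₂ a b : ℝ)
    (hα₁ : 0 < α₁) (hα₂ : 0 < α₂) (ha : 0 ≤ a) (hb : 0 ≤ b) (hab : a + b ≠ 0)
    (hbij : Set.BijOn φ (Set.Ioi (0:ℝ)) (Set.Ioi (0:ℝ)))
    (hcont : ContinuousOn φ (Set.Ioi (0:ℝ)))
    (hmono : StrictMonoOn φ (Set.Ioi (0:ℝ)))
    (heq : ∀ x y : ℝ, 0 < x → 0 < y →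
      α₁ * φ x + α₂ * φ y = φ (a * x + b * y)) :
    0 < a ∧ 0 < b ∧
    (∀ x : ℝ, 0 < x → α₁ * φ x = φ (a * x)) ∧
    (∀ y : ℝ, 0 < y → α₂ * φ y = φ (b * y)) ∧
    (∀ x y : ℝ, 0 < x → 0 < y → φ (x + y) = φ x + φ y) :=
  stmt_7_general φ α₁ α₂ a b hα₁ hα₂ ha hb hbij hcont hmono heq
end

section
/- Let φ : ℝ⁺ → ℝ⁺ be a continuous bijection, and α₁, α₂, β₁, β₂ > 0. If φ⁻¹(α₁·φ(β₁·s + β₂·t) + α₂·φ(β₁·u + β₂·v)) = β₁·φ⁻¹(α₁·φ(s) + α₂·φ(u)) + β₂·φ⁻¹(α₁·φ(t) + α₂·φ(v)) holds for all s, t, u, v > 0, then there exists c > 0 such that φ(x) = c·x for all x > 0. -/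
open Set

lemma affine_of_midpoint (f : ℝ → ℝ) (hc : ContinuousOn f (Set.Ioi 0))
    (hm : ∀ p q : ℝ, 0 < p → 0 < q → f p + f q = 2 * f ((p + q) / 2)) :
    ∃ c d : ℝ, ∀ x : ℝ, 0 < x → f x = c * x + d := by
  refine ⟨f 2 - f 1, 2 * f 1 - f 2, ?_⟩
  set c : ℝ := f 2 - f 1 with hcdef
  set d : ℝ := 2 * f 1 - f 2 with hddef
  set g : ℝ → ℝ := fun x => f x - (c * x + d) with hgdef
  have hgc : ContinuousOn g (Ioi 0) := by
    apply hc.sub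
    exact (continuousOn_const.mul continuousOn_id).add continuousOn_const
  have hgm : ∀ p q : ℝ, 0 < p → 0 < q → g p + g q = 2 * g ((p + q) / 2) := by
    intro p q hp hq
    have h1 : g p + g q - 2 * g ((p + q) / 2)
        = f p + f q - 2 * f ((p + q) / 2) := by
      simp only [hgdef]; ring
    have h2 := hm p q hp hq
    linarith
  have hg1 : g 1 = 0 := by simp only [hgdef, hcdef, hddef]; ring
  have hg2 : g 2 = 0 := by simp only [hgdef, hcdef, hddef]; ring
  suffices h : ∀ x : ℝ, 0 < x → g x = 0 by
    intro x hx
    have := h x hx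
    simp only [hgdef] at this
    linarith
  -- reflection
  have hrefl : ∀ x y : ℝ, 0 < x → 0 < y → g x = 0 → g y = 0 → 0 < 2 * y - x →
      g (2 * y - x) = 0 := by
    intro x y hx hy hgx hgy hpos
    have := hgm x (2 * y - x) hx hpos
    have hmid : (x + (2 * y - x)) / 2 = y := by ring
    rw [hmid, hgx, hgy] at this
    linarith
  -- midpoint
  have hmid0 : ∀ x y : ℝ, 0 < x → 0 < y → g x = 0 → g y = 0 → g ((x + y) / 2) = 0 := by
    intro x y hx hy hgx hgy
    have := hgm x y hx hy
    rw [hgx, hgy] at this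
    linarith
  -- naturals
  have hnat : ∀ n : ℕ, g ((n : ℝ) + 1) = 0 ∧ g ((n : ℝ) + 2) = 0 := by
    intro n
    induction n with
    | zero => constructor <;> norm_num [hg1, hg2]
    | succ m ih =>
      obtain ⟨h1, h2⟩ := ih
      have hpos1 : (0:ℝ) < (m : ℝ) + 1 := by positivity
      have hpos2 : (0:ℝ) < (m : ℝ) + 2 := by positivity
      have h3 : g ((m : ℝ) + 3) = 0 := by
        have := hrefl ((m : ℝ) + 1) ((m : ℝ) + 2) hpos1 hpos2 h1 h2 (by linarith)
        have he : 2 * ((m : ℝ) + 2) - ((m : ℝ) + 1) = (m : ℝ) + 3 := by ring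
        rwa [he] at this
      constructor
      · push_cast
        have e : ((m : ℝ) + 1) + 1 = (m : ℝ) + 2 := by ring
        rw [e]; exact h2
      · push_cast
        have e : ((m : ℝ) + 1) + 2 = (m : ℝ) + 3 := by ring
        rw [e]; exact h3
  intro w hw
  by_contra hgw
  set T : Set ℝ := {x | w ≤ x ∧ g x = 0} with hTdef
  have hTsub : T ⊆ Ioi 0 := fun x hx => lt_of_lt_of_le hw hx.1
  have hTne : T.Nonempty := by
    refine ⟨(⌈w⌉₊ : ℝ) + 1, ⟨?_, (hnat ⌈w⌉₊).1⟩⟩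
    have := Nat.le_ceil w
    linarith
  have hTbdd : BddBelow T := ⟨w, fun x hx => hx.1⟩
  set b : ℝ := sInf T with hbdef
  have hwb : w ≤ b := le_csInf hTne fun x hx => hx.1
  have hb0 : 0 < b := lt_of_lt_of_le hw hwb
  have hgb : g b = 0 := by
    have hbcl : b ∈ closure T := csInf_mem_closure hTne hTbdd
    have hcw : ContinuousWithinAt g T b := (hgc b hb0).mono hTsub
    have := hcw.mem_closure_image hbcl
    have himg : g '' T ⊆ {0} := by
      rintro _ ⟨x, hx, rfl⟩; exact hx.2
    have : g b ∈ closure ({0} : Set ℝ) := closure_mono himg this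
    rwa [closure_singleton, mem_singleton_iff] at this
  have hwb' : w < b := by
    rcases eq_or_lt_of_le hwb with h | h
    · exact absurd (h ▸ hgb) hgw
    · exact h
  -- an element of Z above b
  set D : ℝ := (⌈b⌉₊ : ℝ) + 1 with hDdef
  have hbD : b < D := lt_of_le_of_lt (Nat.le_ceil b) (by linarith)
  have hgD : g D = 0 := (hnat ⌈b⌉₊).1
  -- dyadic approach from above to b
  have hDb : 0 < D - b := by linarith
  have hseq : ∀ k : ℕ, g (b + (D - b) / 2 ^ k) = 0 := by
    intro k
    induction k with
    | zero => simpa using hgD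
    | succ m ih =>
      have hpos : 0 < b + (D - b) / 2 ^ m := by
        have : 0 < (D - b) / 2 ^ m := div_pos hDb (by positivity)
        linarith
      have := hmid0 b (b + (D - b) / 2 ^ m) hb0 hpos hgb ih
      have he : (b + (b + (D - b) / 2 ^ m)) / 2 = b + (D - b) / 2 ^ (m + 1) := by
        rw [pow_succ]; ring
      rwa [he] at this
  obtain ⟨k, hk⟩ := exists_pow_lt_of_lt_one (x := (b - w) / (D - b)) (y := (1:ℝ)/2)
    (div_pos (by linarith) hDb) (by norm_num)
  have hsmall : (D - b) / 2 ^ k < b - w := by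
    have h1 : (D - b) / 2 ^ k = (D - b) * ((1:ℝ)/2) ^ k := by
      rw [div_pow, one_pow]; ring
    have h2 : (D - b) * ((1:ℝ)/2) ^ k < (D - b) * ((b - w) / (D - b)) :=
      mul_lt_mul_of_pos_left hk hDb
    have h3 : (D - b) * ((b - w) / (D - b)) = b - w := by field_simp
    linarith
  -- reflect below b
  have hz : g (b + (D - b) / 2 ^ k) = 0 := hseq k
  have hη : 0 < (D - b) / 2 ^ k := div_pos hDb (by positivity)
  have hzpos : 0 < b + (D - b) / 2 ^ k := by linarith
  have hrpos : 0 < 2 * b - (b + (D - b) / 2 ^ k) := by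
    have : (D - b) / 2 ^ k < b - w := hsmall
    linarith
  have hr := hrefl (b + (D - b) / 2 ^ k) b hzpos hb0 hz hgb hrpos
  have hrT : (2 * b - (b + (D - b) / 2 ^ k)) ∈ T := by
    refine ⟨?_, hr⟩
    have : (D - b) / 2 ^ k < b - w := hsmall
    linarith
  have := csInf_le hTbdd hrT
  rw [← hbdef] at this
  linarith

lemma mono_or_anti (f : ℝ → ℝ) (hc : ContinuousOn f (Set.Ioi 0))
    (hi : Set.InjOn f (Set.Ioi 0)) :
    StrictMonoOn f (Set.Ioi 0) ∨ StrictAntiOn f (Set.Ioi 0) := by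
  have h12 : f 1 ≠ f 2 := by
    intro h
    have := hi (Set.mem_Ioi.2 one_pos) (Set.mem_Ioi.2 two_pos) h
    norm_num at this
  have hM : ∀ x y : ℝ, 0 < x → 0 < y → x < y →
      (f 1 < f 2 → f x < f y) ∧ (f 2 < f 1 → f y < f x) := by
    intro x y hx hy hxy
    set M : ℝ := max y 2 + 1 with hMdef
    have hyM : y < M := by
      have := le_max_left y 2; linarith
    have h2M : (2:ℝ) < M := by
      have := le_max_right y 2; linarith
    have h0M : (0:ℝ) < M := by linarith
    have hmem : ∀ z : ℝ, 0 < z → z < M → z ∈ Ioo (0:ℝ) M := fun z hz hzM => ⟨hz, hzM⟩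
    rcases ContinuousOn.strictMonoOn_of_injOn_Ioo h0M
        (hc.mono Ioo_subset_Ioi_self) (hi.mono Ioo_subset_Ioi_self) with hmono | hanti
    · constructor
      · intro _; exact hmono (hmem x hx (by linarith)) (hmem y hy hyM) hxy
      · intro h21
        exfalso
        have := hmono (hmem 1 one_pos (by linarith)) (hmem 2 two_pos h2M) one_lt_two
        linarith
    · constructor
      · intro h12'
        exfalso
        have := hanti (hmem 1 one_pos (by linarith)) (hmem 2 two_pos h2M) one_lt_two
        linarith
      · intro _; exact hanti (hmem x hx (by linarith)) (hmem y hy hyM) hxy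
  rcases Ne.lt_or_gt h12 with h | h
  · left
    intro x hx y hy hxy
    exact (hM x y hx hy hxy).1 h
  · right
    intro x hx y hy hxy
    exact (hM x y hx hy hxy).2 h

theorem stmt_8 (φ ψ : ℝ → ℝ) (α₁ α₂ β₁ β₂ : ℝ)
    (hα₁ : 0 < α₁) (hα₂ : 0 < α₂) (hβ₁ : 0 < β₁) (hβ₂ : 0 < β₂)
    (hbij : Set.BijOn φ (Set.Ioi (0:ℝ)) (Set.Ioi (0:ℝ)))
    (hcont : ContinuousOn φ (Set.Ioi (0:ℝ)))
    (hψφ : ∀ x : ℝ, 0 < x → ψ (φ x) = x)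
    (hφψ : ∀ t : ℝ, 0 < t → φ (ψ t) = t)
    (heq : ∀ s t u v : ℝ, 0 < s → 0 < t → 0 < u → 0 < v →
      ψ (α₁ * φ (β₁ * s + β₂ * t) + α₂ * φ (β₁ * u + β₂ * v)) =
        β₁ * ψ (α₁ * φ s + α₂ * φ u) + β₂ * ψ (α₁ * φ t + α₂ * φ v)) :
    ∃ c : ℝ, 0 < c ∧ ∀ x : ℝ, 0 < x → φ x = c * x := by
  have hφpos : ∀ x : ℝ, 0 < x → 0 < φ x := fun x hx => hbij.mapsTo hx
  have hψpos : ∀ t : ℝ, 0 < t → 0 < ψ t := by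
    intro t ht
    obtain ⟨x, hx, hfx⟩ := hbij.surjOn (Set.mem_Ioi.2 ht)
    rw [← hfx, hψφ x hx]; exact hx
  have hψsub : Set.Ioi (0:ℝ) ⊆ ψ '' Set.Ioi 0 := fun x hx =>
    ⟨φ x, hφpos x hx, hψφ x hx⟩
  -- continuity of ψ
  have hψc : ContinuousOn ψ (Set.Ioi 0) := by
    rcases mono_or_anti φ hcont hbij.injOn with hφm | hφm
    · have hψm : StrictMonoOn ψ (Set.Ioi 0) := by
        intro t ht t' ht' htt'
        have h1 : 0 < ψ t := hψpos t (Set.mem_Ioi.1 ht)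
        have h2 : 0 < ψ t' := hψpos t' (Set.mem_Ioi.1 ht')
        rcases lt_trichotomy (ψ t) (ψ t') with h | h | h
        · exact h
        · exfalso
          have e1 := hφψ t (Set.mem_Ioi.1 ht)
          have e2 := hφψ t' (Set.mem_Ioi.1 ht')
          rw [← e1, ← e2, h] at htt'
          exact lt_irrefl _ htt'
        · exfalso
          have := hφm (Set.mem_Ioi.2 h2) (Set.mem_Ioi.2 h1) h
          rw [hφψ t (Set.mem_Ioi.1 ht), hφψ t' (Set.mem_Ioi.1 ht')] at this
          exact absurd htt' (not_lt.2 this.le)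
      intro a ha
      exact (hψm.continuousAt_of_image_mem_nhds (Ioi_mem_nhds (Set.mem_Ioi.1 ha))
        (Filter.mem_of_superset (Ioi_mem_nhds (hψpos a (Set.mem_Ioi.1 ha)))
          hψsub)).continuousWithinAt
    · have hψm : StrictMonoOn (fun t => -(ψ t)) (Set.Ioi 0) := by
        intro t ht t' ht' htt'
        simp only [neg_lt_neg_iff]
        have h1 : 0 < ψ t := hψpos t (Set.mem_Ioi.1 ht)
        have h2 : 0 < ψ t' := hψpos t' (Set.mem_Ioi.1 ht')
        rcases lt_trichotomy (ψ t') (ψ t) with h | h | h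
        · exact h
        · exfalso
          have e1 := hφψ t (Set.mem_Ioi.1 ht)
          have e2 := hφψ t' (Set.mem_Ioi.1 ht')
          rw [← e1, ← e2, h] at htt'
          exact lt_irrefl _ htt'
        · exfalso
          have := hφm (Set.mem_Ioi.2 h1) (Set.mem_Ioi.2 h2) h
          rw [hφψ t (Set.mem_Ioi.1 ht), hφψ t' (Set.mem_Ioi.1 ht')] at this
          exact absurd htt' (not_lt.2 this.le)
      have hsub' : Set.Iio (0:ℝ) ⊆ (fun t => -(ψ t)) '' Set.Ioi 0 := by
        intro y hy
        have hy' : 0 < -y := by simpa using Set.mem_Iio.1 hy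
        exact ⟨φ (-y), hφpos _ hy', by simp [hψφ (-y) hy']⟩
      intro a ha
      have hF : ContinuousAt (fun t => -(ψ t)) a := by
        apply hψm.continuousAt_of_image_mem_nhds (Ioi_mem_nhds (Set.mem_Ioi.1 ha))
        exact Filter.mem_of_superset
          (Iio_mem_nhds (neg_lt_zero.2 (hψpos a (Set.mem_Ioi.1 ha)))) hsub'
      have : ContinuousAt ψ a := by
        have := hF.neg
        have h2 : ContinuousAt (fun t => -(-(ψ t))) a := this; simpa only [neg_neg] using h2
      exact this.continuousWithinAt
  -- the two-variable mean
  set Φ : ℝ → ℝ → ℝ := fun x y => ψ (α₁ * φ x + α₂ * φ y) with hΦdef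
  have hsumpos : ∀ x y : ℝ, 0 < x → 0 < y → 0 < α₁ * φ x + α₂ * φ y := by
    intro x y hx hy
    have h1 := hφpos x hx
    have h2 := hφpos y hy
    positivity
  have hΦpos : ∀ x y : ℝ, 0 < x → 0 < y → 0 < Φ x y := fun x y hx hy =>
    hψpos _ (hsumpos x y hx hy)
  have hφΦ : ∀ x y : ℝ, 0 < x → 0 < y → φ (Φ x y) = α₁ * φ x + α₂ * φ y := fun x y hx hy =>
    hφψ _ (hsumpos x y hx hy)
  have heq' : ∀ s t u v : ℝ, 0 < s → 0 < t → 0 < u → 0 < v →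
      Φ (β₁ * s + β₂ * t) (β₁ * u + β₂ * v) = β₁ * Φ s u + β₂ * Φ t v :=
    fun s t u v hs ht hu hv => heq s t u v hs ht hu hv
  have hΦc1 : ∀ w : ℝ, 0 < w → ContinuousOn (fun x => Φ x w) (Set.Ioi 0) := by
    intro w hw
    apply hψc.comp ((continuousOn_const.mul hcont).add continuousOn_const)
    intro x hx
    exact Set.mem_Ioi.2 (hsumpos x w (Set.mem_Ioi.1 hx) hw)
  have hΦc2 : ∀ w : ℝ, 0 < w → ContinuousOn (fun y => Φ w y) (Set.Ioi 0) := by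
    intro w hw
    apply hψc.comp (continuousOn_const.add (continuousOn_const.mul hcont))
    intro y hy
    exact Set.mem_Ioi.2 (hsumpos w y hw (Set.mem_Ioi.1 hy))
  -- midpoint property of Φ in the first variable
  have hmidΦ : ∀ w : ℝ, 0 < w → ∀ p q : ℝ, 0 < p → 0 < q →
      Φ p w + Φ q w = 2 * Φ ((p + q) / 2) w := by
    intro w hw p q hp hq
    have hu0 : 0 < w / (2 * β₁) := by positivity
    have hv0 : 0 < w / (2 * β₂) := by positivity
    have hkey : ∀ s t : ℝ, 0 < s → 0 < t →
        Φ (β₁ * s + β₂ * t) w = β₁ * Φ s (w / (2 * β₁)) + β₂ * Φ t (w / (2 * β₂)) := by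
      intro s t hs ht
      have h := heq' s t (w / (2 * β₁)) (w / (2 * β₂)) hs ht hu0 hv0
      have he : β₁ * (w / (2 * β₁)) + β₂ * (w / (2 * β₂)) = w := by
        field_simp
        ring
      rwa [he] at h
    have e1 := hkey (p / (2 * β₁)) (p / (2 * β₂)) (by positivity) (by positivity)
    have e2 := hkey (q / (2 * β₁)) (q / (2 * β₂)) (by positivity) (by positivity)
    have e3 := hkey (p / (2 * β₁)) (q / (2 * β₂)) (by positivity) (by positivity)
    have e4 := hkey (q / (2 * β₁)) (p / (2 * β₂)) (by positivity) (by positivity)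
    rw [show β₁ * (p / (2 * β₁)) + β₂ * (p / (2 * β₂)) = p by field_simp; ring] at e1
    rw [show β₁ * (q / (2 * β₁)) + β₂ * (q / (2 * β₂)) = q by field_simp; ring] at e2
    rw [show β₁ * (p / (2 * β₁)) + β₂ * (q / (2 * β₂)) = (p + q) / 2 by field_simp] at e3
    rw [show β₁ * (q / (2 * β₁)) + β₂ * (p / (2 * β₂)) = (p + q) / 2 by field_simp; ring] at e4
    linarith
  -- Φ is affine in the first variable
  have key : ∀ w : ℝ, ∃ cA dA : ℝ, ∀ x : ℝ, 0 < w → 0 < x → Φ x w = cA * x + dA := by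
    intro w
    rcases lt_or_ge 0 w with hw | hw
    · obtain ⟨cA, dA, h⟩ := affine_of_midpoint (fun x => Φ x w) (hΦc1 w hw)
        (fun p q hp hq => hmidΦ w hw p q hp hq)
      exact ⟨cA, dA, fun x _ hx => h x hx⟩
    · exact ⟨0, 0, fun x hw' _ => absurd hw' (not_lt.2 hw)⟩
  choose A B hAB using key
  have hW : ∀ u v : ℝ, 0 < u → 0 < v → 0 < β₁ * u + β₂ * v := by
    intro u v hu hv; positivity
  -- A is constant
  have hAconst : ∀ u v : ℝ, 0 < u → 0 < v → A u = A v := by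
    intro u v hu hv
    have hWuv := hW u v hu hv
    have h11 := heq' 1 1 u v one_pos one_pos hu hv
    have h21 := heq' 2 1 u v two_pos one_pos hu hv
    have h12 := heq' 1 2 u v one_pos two_pos hu hv
    rw [hAB (β₁ * u + β₂ * v) (β₁ * 1 + β₂ * 1) hWuv (hW 1 1 one_pos one_pos),
      hAB u 1 hu one_pos, hAB v 1 hv one_pos] at h11
    rw [hAB (β₁ * u + β₂ * v) (β₁ * 2 + β₂ * 1) hWuv (hW 2 1 two_pos one_pos),
      hAB u 2 hu two_pos, hAB v 1 hv one_pos] at h21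
    rw [hAB (β₁ * u + β₂ * v) (β₁ * 1 + β₂ * 2) hWuv (hW 1 2 one_pos two_pos),
      hAB u 1 hu one_pos, hAB v 2 hv two_pos] at h12
    have e1 : β₁ * (A (β₁ * u + β₂ * v) - A u) = 0 := by linear_combination h21 - h11
    have e2 : β₂ * (A (β₁ * u + β₂ * v) - A v) = 0 := by linear_combination h12 - h11
    have f1 : A (β₁ * u + β₂ * v) = A u := by
      rcases mul_eq_zero.1 e1 with h | h
      · exact absurd h (ne_of_gt hβ₁)
      · linarith
    have f2 : A (β₁ * u + β₂ * v) = A v := by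
      rcases mul_eq_zero.1 e2 with h | h
      · exact absurd h (ne_of_gt hβ₂)
      · linarith
    rw [← f1, f2]
  have hAa : ∀ u : ℝ, 0 < u → A u = A 1 := fun u hu => hAconst u 1 hu one_pos
  -- functional equation for B
  have hBeq : ∀ u v : ℝ, 0 < u → 0 < v → B (β₁ * u + β₂ * v) = β₁ * B u + β₂ * B v := by
    intro u v hu hv
    have hWuv := hW u v hu hv
    have h11 := heq' 1 1 u v one_pos one_pos hu hv
    rw [hAB (β₁ * u + β₂ * v) (β₁ * 1 + β₂ * 1) hWuv (hW 1 1 one_pos one_pos),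
      hAB u 1 hu one_pos, hAB v 1 hv one_pos,
      hAa _ hWuv, hAa u hu, hAa v hv] at h11
    linear_combination h11
  -- continuity of B
  have hBc : ContinuousOn B (Set.Ioi 0) := by
    have hc2 : ContinuousOn (fun w => 2 * Φ 1 w - Φ 2 w) (Set.Ioi 0) :=
      (continuousOn_const.mul (hΦc2 1 one_pos)).sub (hΦc2 2 two_pos)
    apply ContinuousOn.congr hc2
    intro w hw
    have h1 := hAB w 1 (Set.mem_Ioi.1 hw) one_pos
    have h2 := hAB w 2 (Set.mem_Ioi.1 hw) two_pos
    simp only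
    linarith
  -- midpoint property of B
  have hmidB : ∀ p q : ℝ, 0 < p → 0 < q → B p + B q = 2 * B ((p + q) / 2) := by
    intro p q hp hq
    have e1 := hBeq (p / (2 * β₁)) (p / (2 * β₂)) (by positivity) (by positivity)
    have e2 := hBeq (q / (2 * β₁)) (q / (2 * β₂)) (by positivity) (by positivity)
    have e3 := hBeq (p / (2 * β₁)) (q / (2 * β₂)) (by positivity) (by positivity)
    have e4 := hBeq (q / (2 * β₁)) (p / (2 * β₂)) (by positivity) (by positivity)
    rw [show β₁ * (p / (2 * β₁)) + β₂ * (p / (2 * β₂)) = p by field_simp; ring] at e1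
    rw [show β₁ * (q / (2 * β₁)) + β₂ * (q / (2 * β₂)) = q by field_simp; ring] at e2
    rw [show β₁ * (p / (2 * β₁)) + β₂ * (q / (2 * β₂)) = (p + q) / 2 by field_simp] at e3
    rw [show β₁ * (q / (2 * β₁)) + β₂ * (p / (2 * β₂)) = (p + q) / 2 by field_simp; ring] at e4
    linarith
  obtain ⟨bb, dd, hB⟩ := affine_of_midpoint B hBc hmidB
  -- explicit form of Φ
  have hΦform : ∀ x y : ℝ, 0 < x → 0 < y → Φ x y = A 1 * x + (bb * y + dd) := by
    intro x y hx hy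
    rw [hAB y x hy hx, hAa y hy, hB y hy]
  have hφeq : ∀ x y : ℝ, 0 < x → 0 < y →
      φ (A 1 * x + (bb * y + dd)) = α₁ * φ x + α₂ * φ y := by
    intro x y hx hy
    rw [← hΦform x y hx hy]
    exact hφΦ x y hx hy
  have hlinpos : ∀ x y : ℝ, 0 < x → 0 < y → 0 < A 1 * x + (bb * y + dd) := by
    intro x y hx hy
    rw [← hΦform x y hx hy]
    exact hΦpos x y hx hy
  set a : ℝ := A 1 with hadef
  -- a ≠ 0
  have ha0 : a ≠ 0 := by
    intro h0
    have e1 := hφeq 1 1 one_pos one_pos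
    have e2 := hφeq 2 1 two_pos one_pos
    rw [h0] at e1 e2
    norm_num at e1 e2
    have h12 : α₁ * φ 1 = α₁ * φ 2 := by linarith
    have hφ12 : φ 1 = φ 2 := mul_left_cancel₀ (ne_of_gt hα₁) h12
    have := hbij.injOn (Set.mem_Ioi.2 one_pos) (Set.mem_Ioi.2 two_pos) hφ12
    norm_num at this
  -- a > 0
  have hapos : 0 < a := by
    rcases lt_trichotomy a 0 with h | h | h
    · exfalso
      have hx0pos : 0 < (|bb * 1 + dd| + 1) / (-a) := div_pos (by positivity) (by linarith)
      have hlp := hlinpos ((|bb * 1 + dd| + 1) / (-a)) 1 hx0pos one_pos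
      have he : a * ((|bb * 1 + dd| + 1) / (-a)) = -(|bb * 1 + dd| + 1) := by
        rw [← mul_div_assoc, div_eq_iff (ne_of_gt (neg_pos.2 h))]
        ring
      rw [he] at hlp
      have habs : bb * 1 + dd ≤ |bb * 1 + dd| := le_abs_self _
      linarith
    · exact absurd h ha0
    · exact h
  -- bb ≠ 0
  have hbb0 : bb ≠ 0 := by
    intro h0
    have e1 := hφeq 1 1 one_pos one_pos
    have e2 := hφeq 1 2 one_pos two_pos
    rw [h0] at e1 e2
    norm_num at e1 e2
    have h12 : α₂ * φ 1 = α₂ * φ 2 := by linarith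
    have hφ12 : φ 1 = φ 2 := mul_left_cancel₀ (ne_of_gt hα₂) h12
    have := hbij.injOn (Set.mem_Ioi.2 one_pos) (Set.mem_Ioi.2 two_pos) hφ12
    norm_num at this
  -- bb > 0
  have hbbpos : 0 < bb := by
    rcases lt_trichotomy bb 0 with h | h | h
    · exfalso
      have hy0pos : 0 < (|a * 1 + dd| + 1) / (-bb) := div_pos (by positivity) (by linarith)
      have hlp := hlinpos 1 ((|a * 1 + dd| + 1) / (-bb)) one_pos hy0pos
      have he : bb * ((|a * 1 + dd| + 1) / (-bb)) = -(|a * 1 + dd| + 1) := by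
        rw [← mul_div_assoc, div_eq_iff (ne_of_gt (neg_pos.2 h))]
        ring
      rw [he] at hlp
      have habs : a * 1 + dd ≤ |a * 1 + dd| := le_abs_self _
      linarith
    · exact absurd h hbb0
    · exact h
  -- translation invariance of increments of φ
  have htrans : ∀ ε x x' : ℝ, 0 < ε → 0 < x → 0 < x' →
      φ (x + ε) - φ x = φ (x' + ε) - φ x' := by
    intro ε x x' hε hx hx'
    have hy : 0 < 1 + a * ε / bb := by
      have : 0 < a * ε / bb := div_pos (mul_pos hapos hε) hbbpos
      linarith
    have keyz : ∀ z : ℝ, 0 < z →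
        α₁ * (φ (z + ε) - φ z) = α₂ * (φ (1 + a * ε / bb) - φ 1) := by
      intro z hz
      have e1 := hφeq (z + ε) 1 (by linarith) one_pos
      have e2 := hφeq z (1 + a * ε / bb) hz hy
      have harg : a * (z + ε) + (bb * 1 + dd) = a * z + (bb * (1 + a * ε / bb) + dd) := by
        field_simp
        ring
      rw [harg] at e1
      rw [e2] at e1
      linarith
    have k1 := keyz x hx
    have k2 := keyz x' hx'
    have hk : α₁ * (φ (x + ε) - φ x) = α₁ * (φ (x' + ε) - φ x') := by linarith
    exact mul_left_cancel₀ (ne_of_gt hα₁) hk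
  -- midpoint property of φ
  have hmidφ : ∀ p q : ℝ, 0 < p → 0 < q → φ p + φ q = 2 * φ ((p + q) / 2) := by
    have keypq : ∀ p q : ℝ, 0 < p → p < q → φ p + φ q = 2 * φ ((p + q) / 2) := by
      intro p q hp hpq
      have hε : 0 < (q - p) / 2 := by linarith
      have hmidpos : 0 < (p + q) / 2 := by linarith
      have h1 := htrans ((q - p) / 2) p ((p + q) / 2) hε hp hmidpos
      rw [show p + (q - p) / 2 = (p + q) / 2 by ring,
        show (p + q) / 2 + (q - p) / 2 = q by ring] at h1
      linarith
    intro p q hp hq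
    rcases lt_trichotomy p q with h | h | h
    · exact keypq p q hp h
    · rw [h, show (q + q) / 2 = q by ring]; ring
    · have := keypq q p hq h
      rw [show (q + p) / 2 = (p + q) / 2 by ring] at this
      linarith
  -- φ is affine
  obtain ⟨c, d₀, hφform⟩ := affine_of_midpoint φ hcont hmidφ
  have hc0 : c ≠ 0 := by
    intro h0
    have e1 := hφform 1 one_pos
    have e2 := hφform 2 two_pos
    rw [h0] at e1 e2
    norm_num at e1 e2
    have hφ12 : φ 1 = φ 2 := by rw [e1, e2]
    have := hbij.injOn (Set.mem_Ioi.2 one_pos) (Set.mem_Ioi.2 two_pos) hφ12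
    norm_num at this
  have hcpos : 0 < c := by
    rcases lt_trichotomy c 0 with h | h | h
    · exfalso
      have hx0 : 0 < (|d₀| + 1) / (-c) := div_pos (by positivity) (by linarith)
      have hval := hφform _ hx0
      have hposφ := hφpos _ hx0
      have he : c * ((|d₀| + 1) / (-c)) = -(|d₀| + 1) := by
        rw [← mul_div_assoc, div_eq_iff (ne_of_gt (neg_pos.2 h))]
        ring
      rw [hval, he] at hposφ
      have habs : d₀ ≤ |d₀| := le_abs_self _
      linarith
    · exact absurd h hc0
    · exact h
  have hd0 : d₀ = 0 := by
    rcases lt_trichotomy d₀ 0 with h | h | h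
    · exfalso
      have hx : 0 < -d₀ / (2 * c) := div_pos (by linarith) (by linarith)
      have hval := hφform _ hx
      have hposφ := hφpos _ hx
      have he : c * (-d₀ / (2 * c)) = -d₀ / 2 := by
        rw [← mul_div_assoc, div_eq_iff (ne_of_gt (mul_pos two_pos hcpos))]
        ring
      rw [hval, he] at hposφ
      linarith
    · exact h
    · exfalso
      obtain ⟨x, hx, hfx⟩ := hbij.surjOn (Set.mem_Ioi.2 (by linarith : (0:ℝ) < d₀ / 2))
      have hxpos : 0 < x := Set.mem_Ioi.1 hx
      have hval := hφform x hxpos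
      rw [hval] at hfx
      have hcx : 0 < c * x := mul_pos hcpos hxpos
      linarith
  exact ⟨c, hcpos, fun x hx => by rw [hφform x hx, hd0, add_zero]⟩
end
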